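/- Let (M, ω, η) be a locally conformally symplectic manifold: ω a non-degenerate 2-form, η a closed 1-form with dω = η ∧ ω. Then the bracket {f,g} := ω^{-1}(df − fη, dg − gη) on C^∞(M) is a Jacobi bracket, i.e. it is skew-symmetric, satisfies the Jacobi identity, and is a first-order differential operator (derivation-plus-multiplication) in each argument. -/

import Mathlib

/-!
Write `X_f := ham f`, so `{f, g} = ω(X_f, X_g)` and `ω(X_{{f,g}}, X_h) = X_h{f,g} - {f,g} η(X_h)`;
call the cyclic sum of these terms the jacobiator `J`. Closedness of `η` gives
`ω([X_f, X_g], X_h) = ω(X_{{g,h}}, X_f) + ω(X_{{h,f}}, X_g)`, so the three bracket terms of the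
Cartan formula for `dω(X_f, X_g, X_h)` add up to `2J`, while `dω = η ∧ ω` says that they add up
to `J`. Hence `J = 2J`, i.e. `J = 0`.
-/

namespace LocallyConformallySymplectic

variable {R : Type*} [CommRing R] [Algebra ℝ R]
  (ω : Derivation ℝ R R →ₗ[R] Derivation ℝ R R →ₗ[R] R) (η : Derivation ℝ R R →ₗ[R] R)
  (ham : R → Derivation ℝ R R)

theorem apply_eq_of_omega_ham (hskew : ∀ X Y, ω X Y = - ω Y X)
    (hham : ∀ f Y, ω (ham f) Y = Y f - f * η Y) (Y : Derivation ℝ R R) (f : R) :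
    Y f = f * η Y - ω Y (ham f) := by
  linear_combination hskew Y (ham f) - hham f Y

theorem omega_lie_ham (hskew : ∀ X Y, ω X Y = - ω Y X)
    (hηcl : ∀ X Y : Derivation ℝ R R, X (η Y) - Y (η X) - η ⁅X, Y⁆ = 0)
    (hham : ∀ f Y, ω (ham f) Y = Y f - f * η Y) (X Y : Derivation ℝ R R) (h : R) :
    ω ⁅X, Y⁆ (ham h)
      = X (ω Y (ham h)) - Y (ω X (ham h)) + η Y * ω X (ham h) - η X * ω Y (ham h) := by
  have hX := apply_eq_of_omega_ham ω η ham hskew hham X h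
  have hY := apply_eq_of_omega_ham ω η ham hskew hham Y h
  have hXY : X (Y h) = h * X (η Y) + η Y * X h - X (ω Y (ham h)) := by
    rw [hY, map_sub, Derivation.leibniz, smul_eq_mul, smul_eq_mul]
  have hYX : Y (X h) = h * Y (η X) + η X * Y h - Y (ω X (ham h)) := by
    rw [hX, map_sub, Derivation.leibniz, smul_eq_mul, smul_eq_mul]
  have hlie := apply_eq_of_omega_ham ω η ham hskew hham ⁅X, Y⁆ h
  rw [Derivation.commutator_apply] at hlie
  linear_combination hlie - hXY + hYX - h * hηcl X Y - η Y * hX + η X * hY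

theorem omega_lie_ham_ham (hskew : ∀ X Y, ω X Y = - ω Y X)
    (hηcl : ∀ X Y : Derivation ℝ R R, X (η Y) - Y (η X) - η ⁅X, Y⁆ = 0)
    (hham : ∀ f Y, ω (ham f) Y = Y f - f * η Y) (f g h : R) :
    ω ⁅ham f, ham g⁆ (ham h)
      = ω (ham (ω (ham g) (ham h))) (ham f) + ω (ham (ω (ham h) (ham f))) (ham g) := by
  have hhf := hskew (ham h) (ham f)
  have hghf : ham g (ω (ham h) (ham f)) = - ham g (ω (ham f) (ham h)) := by
    rw [hhf, map_neg]
  rw [omega_lie_ham ω η ham hskew hηcl hham, hham (ω (ham g) (ham h)), hham (ω (ham h) (ham f))]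
  linear_combination η (ham g) * hhf - hghf

theorem jacobiator_eq_sum_omega_lie (hskew : ∀ X Y, ω X Y = - ω Y X)
    (hdω : ∀ X Y Z : Derivation ℝ R R,
      X (ω Y Z) - Y (ω X Z) + Z (ω X Y) - ω ⁅X, Y⁆ Z + ω ⁅X, Z⁆ Y - ω ⁅Y, Z⁆ X
        = η X * ω Y Z - η Y * ω X Z + η Z * ω X Y)
    (hham : ∀ f Y, ω (ham f) Y = Y f - f * η Y) (f g h : R) :
    ω (ham (ω (ham f) (ham g))) (ham h) + ω (ham (ω (ham g) (ham h))) (ham f)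
        + ω (ham (ω (ham h) (ham f))) (ham g)
      = ω ⁅ham f, ham g⁆ (ham h) + ω ⁅ham g, ham h⁆ (ham f) + ω ⁅ham h, ham f⁆ (ham g) := by
  have hhf := hskew (ham h) (ham f)
  have hghf : ham g (ω (ham h) (ham f)) = - ham g (ω (ham f) (ham h)) := by
    rw [hhf, map_neg]
  have hlie : ω ⁅ham h, ham f⁆ (ham g) = - ω ⁅ham f, ham h⁆ (ham g) := by
    rw [← lie_skew, map_neg, LinearMap.neg_apply]
  rw [hham (ω (ham f) (ham g)), hham (ω (ham g) (ham h)), hham (ω (ham h) (ham f))]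
  linear_combination hdω (ham f) (ham g) (ham h) + hghf - η (ham g) * hhf - hlie

end LocallyConformallySymplectic

open LocallyConformallySymplectic in
theorem stmt14_general (R : Type*) [CommRing R] [Algebra ℝ R]
    (ω : Derivation ℝ R R →ₗ[R] Derivation ℝ R R →ₗ[R] R)
    (η : Derivation ℝ R R →ₗ[R] R)
    (hskew : ∀ X Y : Derivation ℝ R R, ω X Y = - ω Y X)
    (hηcl : ∀ X Y : Derivation ℝ R R, X (η Y) - Y (η X) - η ⁅X, Y⁆ = 0)
    (hdω : ∀ X Y Z : Derivation ℝ R R,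
      X (ω Y Z) - Y (ω X Z) + Z (ω X Y)
          - ω ⁅X, Y⁆ Z + ω ⁅X, Z⁆ Y - ω ⁅Y, Z⁆ X
        = η X * ω Y Z - η Y * ω X Z + η Z * ω X Y)
    (ham : R → Derivation ℝ R R)
    (hham : ∀ (f : R) (Y : Derivation ℝ R R), ω (ham f) Y = Y f - f * η Y) :
    (∀ f g : R, ω (ham f) (ham g) = - ω (ham g) (ham f)) ∧
      (∀ f g h : R,
        ω (ham (ω (ham f) (ham g))) (ham h)
            + ω (ham (ω (ham g) (ham h))) (ham f)
            + ω (ham (ω (ham h) (ham f))) (ham g) = 0) ∧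
      (∀ f : R, ∃ (D : Derivation ℝ R R) (r : R),
        ∀ g : R, ω (ham f) (ham g) = D g + r * g) := by
  refine ⟨fun f g => hskew _ _, fun f g h => ?_, fun f => ⟨-ham f, η (ham f), fun g => ?_⟩⟩
  · have hJ := jacobiator_eq_sum_omega_lie ω η ham hskew hdω hham f g h
    simp only [omega_lie_ham_ham ω η ham hskew hηcl hham] at hJ
    linear_combination -hJ
  · rw [hskew, hham, Derivation.neg_apply]
    ring

/-- Algebraic formulation on `R = C^∞(M)`, with vector fields
`𝔛(M) = Derivation ℝ R R`.  A locally conformally symplectic structure is a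
non-degenerate (hypotheses `hnd`, `hham`) skew `R`-bilinear 2-form `ω` and a
closed 1-form `η` (hypothesis `hηcl`, via the Cartan formula for `dη`) with
`dω = η ∧ ω` (hypothesis `hdω`, via the Cartan formula for `dω`).  `ham f` is
the Hamiltonian-type vector field of `df − fη`, i.e. `ω(ham f, −) = df − fη`,
so that `{f,g} := ω^{-1}(df − fη, dg − gη) = ω(ham f, ham g)`.  Claim: `{−,−}`
is a Jacobi bracket: it is skew-symmetric, satisfies the Jacobi identity, and
is a first-order differential operator (derivation-plus-multiplication) in each
argument (by skew-symmetry it suffices to record it in the second argument). -/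
theorem stmt14 (R : Type*) [CommRing R] [Algebra ℝ R]
    (ω : Derivation ℝ R R →ₗ[R] Derivation ℝ R R →ₗ[R] R)
    (η : Derivation ℝ R R →ₗ[R] R)
    (hskew : ∀ X Y : Derivation ℝ R R, ω X Y = - ω Y X)
    (hηcl : ∀ X Y : Derivation ℝ R R, X (η Y) - Y (η X) - η ⁅X, Y⁆ = 0)
    (hdω : ∀ X Y Z : Derivation ℝ R R,
      X (ω Y Z) - Y (ω X Z) + Z (ω X Y)
          - ω ⁅X, Y⁆ Z + ω ⁅X, Z⁆ Y - ω ⁅Y, Z⁆ X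
        = η X * ω Y Z - η Y * ω X Z + η Z * ω X Y)
    (hnd : ∀ X : Derivation ℝ R R, (∀ Y, ω X Y = 0) → X = 0)
    (ham : R → Derivation ℝ R R)
    (hham : ∀ (f : R) (Y : Derivation ℝ R R), ω (ham f) Y = Y f - f * η Y) :
    (∀ f g : R, ω (ham f) (ham g) = - ω (ham g) (ham f)) ∧
      (∀ f g h : R,
        ω (ham (ω (ham f) (ham g))) (ham h)
            + ω (ham (ω (ham g) (ham h))) (ham f)
            + ω (ham (ω (ham h) (ham f))) (ham g) = 0) ∧
      (∀ f : R, ∃ (D : Derivation ℝ R R) (r : R),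
        ∀ g : R, ω (ham f) (ham g) = D g + r * g) :=
  stmt14_general R ω η hskew hηcl hdω ham hham
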